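/- Let u : Sⁿ → ℝ be smooth and define X̄(e) = −e^u u_p ḡ^{pq}(e_q, 0) + (1/2)(e^u|∇̄u|² + e^{-u})(e,1) + (1/2)e^u(−e,1) ∈ ℝ^{n+1,1}. Then ⟨X̄(e), X̄(e)⟩ = −1 (so X̄(e) ∈ ℍ^{n+1}) and ⟨X̄(e), (e,1)⟩ = −e^{u(e)} for every e ∈ Sⁿ. -/
import Mathlib


open scoped RealInnerProductSpace

/-- The Minkowski inner product on `V × ℝ` (last coordinate timelike):
`⟨(x,s),(y,t)⟩ = x·y − st`. -/
noncomputable def minkP {V : Type*} [NormedAddCommGroup V] [InnerProductSpace ℝ V]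
    (p q : V × ℝ) : ℝ := ⟪p.1, q.1⟫ - p.2 * q.2

/-- The point `X̄(e)` of formula (1.14)/(5.7): for `e ∈ Sⁿ`, with `u = u(e)` the
value of the support function and `G = ∇̄u(e)` its (tangential) gradient,
`X̄ = (−e^u ∇̄u + ((1/2)e^u|∇̄u|² − sinh u) e, (1/2)e^u|∇̄u|² + cosh u)`. -/
noncomputable def barX {V : Type*} [NormedAddCommGroup V] [InnerProductSpace ℝ V]
    (e G : V) (u : ℝ) : V × ℝ :=
  (-(Real.exp u) • G + ((1 / 2) * Real.exp u * ‖G‖ ^ 2 - Real.sinh u) • e,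
    (1 / 2) * Real.exp u * ‖G‖ ^ 2 + Real.cosh u)

/-- For every unit vector `e` and tangential gradient `G` (`⟪G,e⟫ = 0`),
`⟨X̄(e), X̄(e)⟩ = −1` (so `X̄(e) ∈ ℍ^{n+1}`) and `⟨X̄(e), (e,1)⟩ = −e^{u(e)}`. -/
theorem stmt13 {V : Type*} [NormedAddCommGroup V] [InnerProductSpace ℝ V]
    (e G : V) (u : ℝ) (he : ‖e‖ = 1) (hG : ⟪G, e⟫ = 0) :
    minkP (barX e G u) (barX e G u) = -1 ∧
    minkP (barX e G u) (e, (1 : ℝ)) = -Real.exp u := by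
  have hGe : ⟪e, G⟫ = 0 := by rw [real_inner_comm]; exact hG
  have hee : ⟪e, e⟫ = 1 := by
    rw [real_inner_self_eq_norm_sq, he, one_pow]
  have hGG : ⟪G, G⟫ = ‖G‖ ^ 2 := by rw [real_inner_self_eq_norm_sq]
  have hs := Real.sinh_eq u
  have hc := Real.cosh_eq u
  have hexp : Real.exp u * Real.exp (-u) = 1 := by
    rw [← Real.exp_add]; simp
  constructor <;>
    simp only [minkP, barX, inner_add_left, inner_add_right, inner_smul_left,
      inner_smul_right, inner_neg_left, inner_neg_right, hG, hGe, hee, hGG,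
      starRingEnd_apply, star_trivial] <;>
    rw [hs, hc] <;> ring_nf <;> nlinarith [hexp]
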